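/- arXiv:1809.02753 — 2 statements merged into one kernel-verified Lean document; each statement's English description precedes it below -/
import Mathlib

section
/- Policy gradient identity: if π_θ is a stationary distribution of p_θ (i.e., ∑_s π_θ(s) p_θ(s,s') = π_θ(s') and ∑_s π_θ(s) = 1), the differential reward d satisfies the Bellman equation d(s) = T_θ(s) − ξ(θ) + ∑_{s'} p_θ(s,s') d(s') with ξ(θ) = ∑_s π_θ(s) T_θ(s), and all quantities are differentiable in θ, then ∂ξ/∂θ = ∑_s π_θ(s) ( ∂T_θ(s)/∂θ + ∑_{s'} ∂p_θ(s,s')/∂θ · d(s') ). -/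
/-!
Differentiating the Bellman equation `d = T - ξ + P d` in `θ` gives a Poisson equation
`d' = (T' + P' d) - ξ' + P d'` for `d'` with the same matrix `P`. Pairing any Poisson equation
`h = r - g + P h` with a stationary probability vector `π` cancels `π ⬝ h` against
`π ⬝ P h = (π P) ⬝ h`, leaving `g = π ⬝ r`; with `g = ξ'` this is the policy gradient formula.
-/

open Matrix

section Poisson

variable {S : Type*} [Fintype S]

theorem dotProduct_mulVec_of_vecMul_eq_self {π : S → ℝ} {P : Matrix S S ℝ} (hπP : π ᵥ* P = π)
    (v : S → ℝ) : π ⬝ᵥ (P *ᵥ v) = π ⬝ᵥ v := by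
  rw [dotProduct_mulVec, hπP]

theorem gain_eq_dotProduct_of_poisson {π r h : S → ℝ} {P : Matrix S S ℝ} {g : ℝ}
    (hπP : π ᵥ* P = π) (hπ : ∑ s, π s = 1) (hpoisson : ∀ s, h s = r s - g + (P *ᵥ h) s) :
    g = π ⬝ᵥ r := by
  have hpair : π ⬝ᵥ h = π ⬝ᵥ r - g * ∑ s, π s + π ⬝ᵥ (P *ᵥ h) :=
    calc π ⬝ᵥ h = ∑ s, (π s * r s - g * π s + π s * (P *ᵥ h) s) :=
          Finset.sum_congr rfl fun s _ => by rw [hpoisson s]; ring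
      _ = π ⬝ᵥ r - g * ∑ s, π s + π ⬝ᵥ (P *ᵥ h) := by
          rw [Finset.sum_add_distrib, Finset.sum_sub_distrib, ← Finset.mul_sum]; rfl
  rw [dotProduct_mulVec_of_vecMul_eq_self hπP, hπ] at hpair
  linarith

theorem hasDerivAt_mulVec_apply {P : ℝ → Matrix S S ℝ} {v : ℝ → S → ℝ} {P' : Matrix S S ℝ}
    {v' : S → ℝ} {θ : ℝ} (hP : ∀ s s', HasDerivAt (fun θ => P θ s s') (P' s s') θ)
    (hv : ∀ s, HasDerivAt (fun θ => v θ s) (v' s) θ) (s : S) :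
    HasDerivAt (fun θ => (P θ *ᵥ v θ) s) ((P' *ᵥ v θ) s + (P θ *ᵥ v') s) θ := by
  simp only [mulVec, dotProduct, ← Finset.sum_add_distrib]
  exact HasDerivAt.fun_sum fun s' _ => (hP s s').mul (hv s')

end Poisson

theorem stmt_11_general {S : Type*} [Fintype S]
    (p : ℝ → S → S → ℝ) (T : ℝ → S → ℝ) (π : ℝ → S → ℝ) (d : ℝ → S → ℝ)
    (hpdiff : ∀ s s', Differentiable ℝ (fun θ => p θ s s'))
    (hTdiff : ∀ s, Differentiable ℝ (fun θ => T θ s))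
    (hπdiff : ∀ s, Differentiable ℝ (fun θ => π θ s))
    (hddiff : ∀ s, Differentiable ℝ (fun θ => d θ s))
    (hπsum : ∀ θ, ∑ s : S, π θ s = 1)
    (hstat : ∀ θ s', ∑ s : S, π θ s * p θ s s' = π θ s')
    (ξ : ℝ → ℝ) (hξ : ξ = fun θ => ∑ s : S, π θ s * T θ s)
    (hBellman : ∀ θ s, d θ s = T θ s - ξ θ + ∑ s' : S, p θ s s' * d θ s') :
    ∀ θ : ℝ, deriv ξ θ =
      ∑ s : S, π θ s *
        (deriv (fun θ' => T θ' s) θ +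
          ∑ s' : S, deriv (fun θ' => p θ' s s') θ * d θ s') := by
  intro θ
  have hξdiff : Differentiable ℝ ξ :=
    hξ ▸ Differentiable.fun_sum fun s _ => (hπdiff s).mul (hTdiff s)
  set P' : Matrix S S ℝ := fun s s' => deriv (fun θ' => p θ' s s') θ
  set d' : S → ℝ := fun s => deriv (fun θ' => d θ' s) θ
  have hpoisson : ∀ s, d' s =
      (deriv (fun θ' => T θ' s) θ + (P' *ᵥ d θ) s) - deriv ξ θ + (p θ *ᵥ d') s := by
    intro s
    have hbellman_s : (fun θ' => d θ' s) = fun θ' => T θ' s - ξ θ' + (p θ' *ᵥ d θ') s :=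
      funext fun θ' => hBellman θ' s
    have hderiv := ((hTdiff s θ).hasDerivAt.fun_sub (hξdiff θ).hasDerivAt).fun_add
      (hasDerivAt_mulVec_apply (fun s s' => (hpdiff s s' θ).hasDerivAt)
        (fun s' => (hddiff s' θ).hasDerivAt) s)
    rw [show d' s = deriv (fun θ' => d θ' s) θ from rfl, hbellman_s, hderiv.deriv]
    ring
  exact gain_eq_dotProduct_of_poisson (funext (hstat θ)) (hπsum θ) hpoisson

/-- Policy gradient identity: if `π_θ` is a stationary probability vector of
the differentiable family of stochastic matrices `p_θ`, the differential
reward `d_θ` solves the Bellman equation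
`d_θ(s) = T_θ(s) - ξ(θ) + ∑_{s'} p_θ(s,s') d_θ(s')` with
`ξ(θ) = ∑_s π_θ(s) T_θ(s)`, then
`ξ'(θ) = ∑_s π_θ(s) (T_θ'(s) + ∑_{s'} p_θ'(s,s') d_θ(s'))`. -/
theorem stmt_11 {S : Type*} [Fintype S]
    (p : ℝ → S → S → ℝ) (T : ℝ → S → ℝ) (π : ℝ → S → ℝ) (d : ℝ → S → ℝ)
    (hpnonneg : ∀ θ s s', 0 ≤ p θ s s')
    (hprow : ∀ θ s, ∑ s' : S, p θ s s' = 1)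
    (hpdiff : ∀ s s', Differentiable ℝ (fun θ => p θ s s'))
    (hTdiff : ∀ s, Differentiable ℝ (fun θ => T θ s))
    (hπdiff : ∀ s, Differentiable ℝ (fun θ => π θ s))
    (hddiff : ∀ s, Differentiable ℝ (fun θ => d θ s))
    (hπnonneg : ∀ θ s, 0 ≤ π θ s)
    (hπsum : ∀ θ, ∑ s : S, π θ s = 1)
    (hstat : ∀ θ s', ∑ s : S, π θ s * p θ s s' = π θ s')
    (ξ : ℝ → ℝ) (hξ : ξ = fun θ => ∑ s : S, π θ s * T θ s)
    (hBellman : ∀ θ s, d θ s = T θ s - ξ θ + ∑ s' : S, p θ s s' * d θ s') :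
    ∀ θ : ℝ, deriv ξ θ =
      ∑ s : S, π θ s *
        (deriv (fun θ' => T θ' s) θ +
          ∑ s' : S, deriv (fun θ' => p θ' s s') θ * d θ s') :=
  stmt_11_general p T π d hpdiff hTdiff hπdiff hddiff hπsum hstat ξ hξ hBellman
end

section
/- A solution d of the average-reward Bellman equation d(s) = T(s) − ξ + ∑_{s'} p(s,s') d(s') is unique up to an additive constant: if d₁ and d₂ both solve it for the same p, T, ξ, and p is irreducible, then d₁ − d₂ is constant on S. -/
/-- A solution of the average-reward Bellman equation for an irreducible
stochastic matrix is unique up to an additive constant. -/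
theorem stmt_12 {S : Type*} [Fintype S] [DecidableEq S]
    (p : Matrix S S ℝ)
    (hnonneg : ∀ s s', 0 ≤ p s s')
    (hrow : ∀ s, ∑ s' : S, p s s' = 1)
    (hirr : ∀ s s' : S, ∃ n : ℕ, 1 ≤ n ∧ 0 < (p ^ n) s s')
    (T : S → ℝ) (ξ : ℝ) (d₁ d₂ : S → ℝ)
    (h₁ : ∀ s, d₁ s = T s - ξ + ∑ s' : S, p s s' * d₁ s')
    (h₂ : ∀ s, d₂ s = T s - ξ + ∑ s' : S, p s s' * d₂ s') :
    ∀ s s' : S, d₁ s - d₂ s = d₁ s' - d₂ s' := by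
  set f : S → ℝ := fun s => d₁ s - d₂ s with hf_def
  have hf : ∀ s, f s = ∑ s' : S, p s s' * f s' := by
    intro s
    have := h₁ s
    have := h₂ s
    simp only [hf_def]
    rw [h₁ s, h₂ s]
    rw [show ∑ s' : S, p s s' * (d₁ s' - d₂ s')
        = (∑ s' : S, p s s' * d₁ s') - ∑ s' : S, p s s' * d₂ s' by
      rw [← Finset.sum_sub_distrib]; exact Finset.sum_congr rfl fun x _ => by ring]
    ring
  -- nonnegativity of entries of p^n
  have hpn_nonneg : ∀ n : ℕ, ∀ s s', 0 ≤ (p ^ n) s s' := by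
    intro n
    induction n with
    | zero => intro s s'; simp [Matrix.one_apply]; split <;> norm_num
    | succ n ih =>
      intro s s'
      rw [pow_succ, Matrix.mul_apply]
      exact Finset.sum_nonneg fun t _ => mul_nonneg (ih s t) (hnonneg t s')
  -- rows of p^n sum to 1
  have hpn_row : ∀ n : ℕ, ∀ s, ∑ s' : S, (p ^ n) s s' = 1 := by
    intro n
    induction n with
    | zero => intro s; simp [Matrix.one_apply]
    | succ n ih =>
      intro s
      simp only [pow_succ, Matrix.mul_apply]
      rw [Finset.sum_comm]
      calc ∑ t : S, ∑ s' : S, (p ^ n) s t * p t s'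
          = ∑ t : S, (p ^ n) s t * ∑ s' : S, p t s' := by
            exact Finset.sum_congr rfl fun t _ => (Finset.mul_sum _ _ _).symm
        _ = ∑ t : S, (p ^ n) s t := by
            exact Finset.sum_congr rfl fun t _ => by rw [hrow t, mul_one]
        _ = 1 := ih s
  -- f is harmonic for all powers
  have hfn : ∀ n : ℕ, ∀ s, f s = ∑ s' : S, (p ^ n) s s' * f s' := by
    intro n
    induction n with
    | zero => intro s; simp [Matrix.one_apply]
    | succ n ih =>
      intro s
      rw [hf s]
      simp only [pow_succ', Matrix.mul_apply]
      calc ∑ t : S, p s t * f t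
          = ∑ t : S, p s t * ∑ u : S, (p ^ n) t u * f u := by
            exact Finset.sum_congr rfl fun t _ => by rw [← ih t]
        _ = ∑ t : S, ∑ u : S, p s t * ((p ^ n) t u * f u) := by
            exact Finset.sum_congr rfl fun t _ => Finset.mul_sum _ _ _
        _ = ∑ u : S, ∑ t : S, p s t * ((p ^ n) t u * f u) := Finset.sum_comm
        _ = ∑ u : S, (∑ t : S, p s t * (p ^ n) t u) * f u := by
            refine Finset.sum_congr rfl fun u _ => ?_
            rw [Finset.sum_mul]
            exact Finset.sum_congr rfl fun t _ => by ring
  intro s s'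
  -- pick a maximizer of f
  obtain ⟨t₀, -, ht₀⟩ := Finset.exists_max_image (Finset.univ : Finset S) f ⟨s, Finset.mem_univ s⟩
  have hmax : ∀ u, f u ≤ f t₀ := fun u => ht₀ u (Finset.mem_univ u)
  have key : ∀ u : S, f u = f t₀ := by
    intro u
    by_contra hne
    have hlt : f u < f t₀ := lt_of_le_of_ne (hmax u) hne
    obtain ⟨n, -, hpos⟩ := hirr t₀ u
    have : f t₀ < f t₀ := by
      calc f t₀ = ∑ v : S, (p ^ n) t₀ v * f v := hfn n t₀
        _ < ∑ v : S, (p ^ n) t₀ v * f t₀ := by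
            refine Finset.sum_lt_sum (fun v _ => ?_) ⟨u, Finset.mem_univ u, ?_⟩
            · exact mul_le_mul_of_nonneg_left (hmax v) (hpn_nonneg n t₀ v)
            · exact mul_lt_mul_of_pos_left hlt hpos
        _ = f t₀ := by rw [← Finset.sum_mul, hpn_row n t₀, one_mul]
    exact lt_irrefl _ this
  calc f s = f t₀ := key s
    _ = f s' := (key s').symm
end
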